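/- Suppose ρ̇ : ∂E → ℝ is continuous on an ellipse E with the ℤ₂×ℤ₂ symmetry (invariance under (x,y) ↦ (±x,±y)), ρ̇ vanishes at the four endpoints of the axes, and after the change of variables the transform A(Z) = ∫_a^b ρ̇(t) γ₁(t) J(t) (t-(b-Z))^{-1/2} dt (with γ₁ J continuous and strictly positive on (a,b)) vanishes for a sequence of Z accumulating at b from below. Then ρ̇ ≡ 0. -/

import Mathlib

/-!
Write `f = ρ̇ w` and `F_p(s) = ∫_a^b f(t) (t - s)^p dt` for `s < a`, so that
`A Z = F_{-1/2}(b - Z)`. Differentiating under the integral gives `F_p' = -p F_{p-1}`, so by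
Rolle's theorem zeros of `F_{-1/2}` accumulating at `0⁺` produce zeros of every `F_{-1/2-n}`
accumulating at `0⁺`, and by continuity all the moments `∫_a^b f(t) t^{-1/2} t^{-n} dt` vanish.
Since `a > 0`, polynomials in `t⁻¹` are dense in `C[a, b]` (Weierstrass after `u = t⁻¹`), so
`f(t) t^{-1/2}` is orthogonal to itself and vanishes. As `w > 0` inside, `ρ̇ = 0` on `(a, b)`,
hence on `[a, b]` by continuity.
-/

open MeasureTheory intervalIntegral Set Filter Topology

theorem Filter.Frequently.hasDerivAt_eq_zero {g g' : ℝ → ℝ} {x₀ : ℝ}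
    (hg : ∀ᶠ x in 𝓝[>] x₀, HasDerivAt g (g' x) x) (h0 : ∃ᶠ x in 𝓝[>] x₀, g x = 0) :
    ∃ᶠ x in 𝓝[>] x₀, g' x = 0 := by
  refine frequently_iff.2 fun {U} hU => ?_
  obtain ⟨u, hu, hsub⟩ := mem_nhdsGT_iff_exists_Ioo_subset.1 (inter_mem hU hg)
  obtain ⟨s₁, hs₁, hgs₁⟩ := frequently_iff.1 h0 (Ioo_mem_nhdsGT hu)
  obtain ⟨s₂, hs₂, hgs₂⟩ := frequently_iff.1 h0 (Ioo_mem_nhdsGT hs₁.1)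
  have hderiv : ∀ x ∈ Icc s₂ s₁, HasDerivAt g (g' x) x := fun x hx =>
    (hsub ⟨hs₂.1.trans_le hx.1, hx.2.trans_lt hs₁.2⟩).2
  obtain ⟨c, hc, hg'c⟩ := exists_hasDerivAt_eq_zero hs₂.2
    (fun x hx => (hderiv x hx).continuousAt.continuousWithinAt) (hgs₂.trans hgs₁.symm)
    fun x hx => hderiv x (Ioo_subset_Icc_self hx)
  exact ⟨c, (hsub ⟨hs₂.1.trans hc.1, hc.2.trans hs₁.2⟩).1, hg'c⟩

section

variable {f : ℝ → ℝ} {a b : ℝ}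

theorem hasDerivAt_integral_mul_sub_rpow (hab : a ≤ b) (hf : ContinuousOn f (Icc a b)) (p : ℝ)
    {s₀ : ℝ} (hs₀ : s₀ < a) :
    HasDerivAt (fun s => ∫ t in a..b, f t * (t - s) ^ p)
      (-p * ∫ t in a..b, f t * (t - s₀) ^ (p - 1)) s₀ := by
  set ε := (a - s₀) / 2
  have hε : 0 < ε := by simp only [ε]; linarith
  have hIoc : uIoc a b ⊆ Icc a b := by rw [uIoc_of_le hab]; exact Ioc_subset_Icc_self
  have hpos : ∀ x ∈ Metric.closedBall s₀ ε, ∀ t ∈ Icc a b, 0 < t - x := fun x hx t ht => by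
    have := (abs_le.1 (Real.dist_eq x s₀ ▸ Metric.mem_closedBall.1 hx)).2
    simp only [ε] at this; linarith [ht.1]
  have hcont : ∀ {x} (q : ℝ), x ∈ Metric.closedBall s₀ ε →
      ContinuousOn (fun t => (t - x) ^ q) (Icc a b) := fun {x} q hx =>
    (continuous_sub_right x).continuousOn.rpow_const fun t ht => Or.inl (hpos x hx t ht).ne'
  obtain ⟨M, hM⟩ := isCompact_Icc.exists_bound_of_continuousOn hf
  obtain ⟨C, hC⟩ := (isCompact_closedBall s₀ ε |>.prod isCompact_Icc).exists_bound_of_continuousOn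
    (f := fun z : ℝ × ℝ => -p * (z.2 - z.1) ^ (p - 1)) <| continuousOn_const.mul <|
      (continuousOn_snd.sub continuousOn_fst).rpow_const fun z hz => Or.inl (hpos _ hz.1 _ hz.2).ne'
  have key : HasDerivAt (fun s => ∫ t in a..b, f t * (t - s) ^ p)
      (∫ t in a..b, f t * (-p * (t - s₀) ^ (p - 1))) s₀ := by
    refine (hasDerivAt_integral_of_dominated_loc_of_deriv_le (μ := volume)
      (F := fun s t => f t * (t - s) ^ p) (F' := fun s t => f t * (-p * (t - s) ^ (p - 1)))
      (bound := fun _ => M * C) (Metric.closedBall_mem_nhds s₀ hε) ?_ ?_ ?_ ?_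
      intervalIntegrable_const ?_).2
    · filter_upwards [Metric.closedBall_mem_nhds s₀ hε] with x hx
      exact ((hf.mul (hcont p hx)).mono hIoc).aestronglyMeasurable measurableSet_uIoc
    · exact (hf.mul (hcont p (Metric.mem_closedBall_self hε.le))).intervalIntegrable_of_Icc hab
    · exact ((hf.mul (continuousOn_const.mul (hcont (p - 1)
        (Metric.mem_closedBall_self hε.le)))).mono hIoc).aestronglyMeasurable measurableSet_uIoc
    · refine ae_of_all _ fun t ht x hx => ?_
      rw [norm_mul]
      exact mul_le_mul (hM t (hIoc ht)) (hC (x, t) ⟨hx, hIoc ht⟩) (norm_nonneg _)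
        ((norm_nonneg _).trans (hM t (hIoc ht)))
    · refine ae_of_all _ fun t ht x hx => ?_
      have := (((hasDerivAt_id x).const_sub t).rpow_const (p := p)
        (Or.inl (hpos x hx t (hIoc ht)).ne')).const_mul (f t)
      exact this.congr_deriv (by simp only [id]; ring)
  rw [← intervalIntegral.integral_const_mul]
  exact key.congr_deriv (integral_congr fun t _ => by ring)

theorem Filter.Frequently.integral_mul_sub_rpow_sub_one_eq_zero (hab : a ≤ b)
    (hf : ContinuousOn f (Icc a b)) {p x₀ : ℝ} (hp : p ≠ 0) (hx₀ : x₀ < a)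
    (h : ∃ᶠ s in 𝓝[>] x₀, ∫ t in a..b, f t * (t - s) ^ p = 0) :
    ∃ᶠ s in 𝓝[>] x₀, ∫ t in a..b, f t * (t - s) ^ (p - 1) = 0 := by
  have hderiv : ∀ᶠ s in 𝓝[>] x₀, HasDerivAt (fun s => ∫ t in a..b, f t * (t - s) ^ p)
      (-p * ∫ t in a..b, f t * (t - s) ^ (p - 1)) s := by
    filter_upwards [Ioo_mem_nhdsGT hx₀] with s hs
    exact hasDerivAt_integral_mul_sub_rpow hab hf p hs.2
  exact (h.hasDerivAt_eq_zero hderiv).mono fun s hs =>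
    (mul_eq_zero.1 hs).resolve_left (neg_ne_zero.2 hp)

theorem integral_mul_sub_rpow_sub_nat_eq_zero (hab : a ≤ b) (hf : ContinuousOn f (Icc a b))
    {p x₀ : ℝ} (hp : ∀ k : ℕ, p ≠ k) (hx₀ : x₀ < a)
    (h : ∃ᶠ s in 𝓝[>] x₀, ∫ t in a..b, f t * (t - s) ^ p = 0) (n : ℕ) :
    ∫ t in a..b, f t * (t - x₀) ^ (p - n) = 0 := by
  have hfreq : ∃ᶠ s in 𝓝[>] x₀, ∫ t in a..b, f t * (t - s) ^ (p - n) = 0 := by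
    induction n with
    | zero => simpa using h
    | succ n ih =>
      rw [Nat.cast_succ, ← sub_sub]
      exact ih.integral_mul_sub_rpow_sub_one_eq_zero hab hf (sub_ne_zero.2 (hp n)) hx₀
  have hcont := (hasDerivAt_integral_mul_sub_rpow hab hf (p - n) hx₀).continuousAt
  exact tendsto_nhds_unique_of_frequently_eq (hcont.tendsto.mono_left nhdsWithin_le_nhds)
    tendsto_const_nhds hfreq

end

section

variable {h : ℝ → ℝ} {a b : ℝ}

theorem continuousOn_eval_inv (ha : 0 < a) (P : Polynomial ℝ) :
    ContinuousOn (fun t => P.eval t⁻¹) (Icc a b) :=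
  P.continuous.comp_continuousOn <| continuousOn_inv₀.mono fun _ ht => (ha.trans_le ht.1).ne'

theorem integral_mul_eval_inv_eq_zero (ha : 0 < a) (hab : a ≤ b) (hh : ContinuousOn h (Icc a b))
    (hmom : ∀ n : ℕ, ∫ t in a..b, h t * t⁻¹ ^ n = 0) (P : Polynomial ℝ) :
    ∫ t in a..b, h t * P.eval t⁻¹ = 0 := by
  have hint : ∀ P : Polynomial ℝ, IntervalIntegrable (fun t => h t * P.eval t⁻¹) volume a b :=
    fun P => (hh.mul (continuousOn_eval_inv ha P)).intervalIntegrable_of_Icc hab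
  induction P using Polynomial.induction_on' with
  | add P Q hP hQ =>
    simp only [Polynomial.eval_add, mul_add]
    rw [integral_add (hint P) (hint Q), hP, hQ, add_zero]
  | monomial n c =>
    simp only [Polynomial.eval_monomial, mul_left_comm _ c, intervalIntegral.integral_const_mul,
      hmom, mul_zero]

theorem integral_mul_eq_zero_of_integral_mul_eval_inv_eq_zero (ha : 0 < a) (hab : a ≤ b)
    (hh : ContinuousOn h (Icc a b))
    (hP : ∀ P : Polynomial ℝ, ∫ t in a..b, h t * P.eval t⁻¹ = 0) {g : ℝ → ℝ}
    (hg : ContinuousOn g (Icc a b)) :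
    ∫ t in a..b, h t * g t = 0 := by
  have hinv : ∀ t ∈ Icc a b, t⁻¹ ∈ Icc b⁻¹ a⁻¹ := fun t ht =>
    ⟨inv_anti₀ (ha.trans_le ht.1) ht.2, inv_anti₀ ha ht.1⟩
  have hg' : ContinuousOn (fun u => g u⁻¹) (Icc b⁻¹ a⁻¹) := by
    have hb' : 0 < b⁻¹ := inv_pos.2 (ha.trans_le hab)
    refine hg.comp (continuousOn_inv₀.mono fun u hu => (hb'.trans_le hu.1).ne') fun u hu => ?_
    exact ⟨by simpa using inv_anti₀ (hb'.trans_le hu.1) hu.2, by simpa using inv_anti₀ hb' hu.1⟩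
  obtain ⟨M, hM⟩ := isCompact_Icc.exists_bound_of_continuousOn hh
  refine eq_of_forall_dist_le fun ε hε => ?_
  have hδ : 0 < ε / ((|M| + 1) * (b - a + 1)) := by
    have : 0 ≤ b - a := sub_nonneg.2 hab
    positivity
  obtain ⟨P, hPg⟩ := exists_polynomial_near_of_continuousOn _ _ _ hg' _ hδ
  calc dist (∫ t in a..b, h t * g t) 0
      = ‖∫ t in a..b, h t * (g t - P.eval t⁻¹)‖ := by
        have hhg : IntervalIntegrable (fun t => h t * g t) volume a b :=
          (hh.mul hg).intervalIntegrable_of_Icc hab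
        have hhP : IntervalIntegrable (fun t => h t * P.eval t⁻¹) volume a b :=
          (hh.mul (continuousOn_eval_inv ha P)).intervalIntegrable_of_Icc hab
        simp only [mul_sub]
        rw [integral_sub hhg hhP, hP, sub_zero, dist_zero_right]
    _ ≤ (|M| + 1) * (ε / ((|M| + 1) * (b - a + 1))) * |b - a| := by
        refine norm_integral_le_of_norm_le_const fun t ht => ?_
        have ht' : t ∈ Icc a b := by rw [uIoc_of_le hab] at ht; exact Ioc_subset_Icc_self ht
        rw [norm_mul]
        refine mul_le_mul ((hM t ht').trans (by linarith [le_abs_self M])) ?_ (norm_nonneg _)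
          (by positivity)
        simpa [Real.norm_eq_abs, abs_sub_comm] using (hPg t⁻¹ (hinv t ht')).le
    _ ≤ ε := by
        rw [abs_of_nonneg (sub_nonneg.2 hab)]
        field_simp
        exact div_le_one_of_le₀ (by linarith) (by linarith)

theorem eqOn_zero_of_integral_mul_inv_pow_eq_zero (ha : 0 < a) (hab : a < b)
    (hh : ContinuousOn h (Icc a b)) (hmom : ∀ n : ℕ, ∫ t in a..b, h t * t⁻¹ ^ n = 0) :
    EqOn h 0 (Icc a b) := by
  have hsq : ∫ t in a..b, h t * h t = 0 :=
    integral_mul_eq_zero_of_integral_mul_eval_inv_eq_zero ha hab.le hh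
      (integral_mul_eval_inv_eq_zero ha hab.le hh hmom) hh
  intro c hc
  by_contra hne
  have hpos : ∫ _ in a..b, (0 : ℝ) < ∫ t in a..b, h t * h t :=
    integral_lt_integral_of_continuousOn_of_le_of_exists_lt hab continuousOn_const (hh.mul hh)
      (fun t _ => mul_self_nonneg (h t)) ⟨c, hc, mul_self_pos.2 hne⟩
  rw [intervalIntegral.integral_zero, hsq] at hpos
  exact lt_irrefl 0 hpos

end

theorem stmt_14_general (a b : ℝ) (ha : 0 < a) (hab : a < b)
    (ρdot w : ℝ → ℝ)
    (hρ : ContinuousOn ρdot (Set.Icc a b)) (hw : ContinuousOn w (Set.Icc a b))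
    (hwpos : ∀ t ∈ Set.Ioo a b, 0 < w t)
    (A : ℝ → ℝ)
    (hA : ∀ Z, A Z = ∫ t in a..b, ρdot t * w t / Real.sqrt (t - (b - Z)))
    (hzeros : ∀ δ > 0, ∃ Z ∈ Set.Ioo (b - δ) b, A Z = 0) :
    ∀ t ∈ Set.Icc a b, ρdot t = 0 := by
  set f := fun t => ρdot t * w t
  have hf : ContinuousOn f (Icc a b) := hρ.mul hw
  have hfreq : ∃ᶠ s in 𝓝[>] 0, ∫ t in a..b, f t * (t - s) ^ (-(1 / 2) : ℝ) = 0 := by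
    refine frequently_iff.2 fun {U} hU => ?_
    obtain ⟨u, hu, hsub⟩ := mem_nhdsGT_iff_exists_Ioo_subset.1
      (inter_mem hU (nhdsWithin_le_nhds (Iio_mem_nhds ha)))
    obtain ⟨Z, hZ, hAZ⟩ := hzeros u hu
    have hs := hsub ⟨sub_pos.2 hZ.2, by linarith [hZ.1]⟩
    refine ⟨b - Z, hs.1, ?_⟩
    rw [← hAZ, hA]
    refine integral_congr fun t ht => ?_
    have : 0 ≤ t - (b - Z) := by rw [uIcc_of_le hab.le] at ht; linarith [ht.1, hs.2.out]
    rw [Real.rpow_neg this, ← Real.sqrt_eq_rpow, div_eq_mul_inv]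
  have hmom : ∀ n : ℕ, ∫ t in a..b, f t * t ^ (-(1 / 2) : ℝ) * t⁻¹ ^ n = 0 := fun n => by
    rw [← integral_mul_sub_rpow_sub_nat_eq_zero hab.le hf
      (fun k hk => by linarith [k.cast_nonneg (α := ℝ)]) ha hfreq n]
    refine integral_congr fun t ht => ?_
    have : 0 < t := by rw [uIcc_of_le hab.le] at ht; exact ha.trans_le ht.1
    simp only [sub_zero, Real.rpow_sub this, Real.rpow_natCast, div_eq_mul_inv, inv_pow, mul_assoc]
  have hf0 := eqOn_zero_of_integral_mul_inv_pow_eq_zero ha hab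
    (hf.mul (continuousOn_id.rpow_const fun t ht => Or.inl (ha.trans_le ht.1).ne')) hmom
  have hρ0 : EqOn ρdot 0 (Ioo a b) := fun t ht => by
    simpa [f, (hwpos t ht).ne', (Real.rpow_pos_of_pos (ha.trans ht.1) _).ne'] using
      hf0 (Ioo_subset_Icc_self ht)
  exact fun t ht => hρ0.of_subset_closure hρ continuousOn_const Ioo_subset_Icc_self
    (closure_Ioo hab.ne).ge ht

/-- Abel-transform rigidity step (after the change of variables to the invariant
parameter `t ∈ [a,b]`): if `ρ̇` is continuous on `[a,b]`, vanishes at the endpoints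
(the axis points), the weight `w = γ₁ J` is continuous and strictly positive on
`(a,b)`, and the Abel transform `A(Z) = ∫_a^b ρ̇(t) w(t) (t-(b-Z))^{-1/2} dt` vanishes
for a sequence of `Z` accumulating at `b` from below, then `ρ̇ ≡ 0` on `[a,b]`. -/
theorem stmt_14 (a b : ℝ) (ha : 0 < a) (hab : a < b)
    (ρdot w : ℝ → ℝ)
    (hρ : ContinuousOn ρdot (Set.Icc a b)) (hw : ContinuousOn w (Set.Icc a b))
    (hwpos : ∀ t ∈ Set.Ioo a b, 0 < w t)
    (hend : ρdot a = 0 ∧ ρdot b = 0)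
    (A : ℝ → ℝ)
    (hA : ∀ Z, A Z = ∫ t in a..b, ρdot t * w t / Real.sqrt (t - (b - Z)))
    (hzeros : ∀ δ > 0, ∃ Z ∈ Set.Ioo (b - δ) b, A Z = 0) :
    ∀ t ∈ Set.Icc a b, ρdot t = 0 :=
  stmt_14_general a b ha hab ρdot w hρ hw hwpos A hA hzeros
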